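/- Let W = Av(132, 231) ∪ Av(213, 312) ∪ Av(132, 312) ∪ Av(213, 231) ∪ {2143, 2413, 3142, 3412, 25314, 41352}. For every n ≥ 6, the number of permutations of length n in W equals 2^{n+1} − 4n + 2. -/

import Mathlib

/-- A permutation of length `n ≥ 1` in one-line notation: a nonempty list of
natural numbers that is a rearrangement of `1, …, n` where `n` is its length. -/
def IsPermList (l : List ℕ) : Prop := l ≠ [] ∧ l.Perm (List.range' 1 l.length)

instance (l : List ℕ) : Decidable (IsPermList l) :=
  inferInstanceAs (Decidable (l ≠ [] ∧ l.Perm (List.range' 1 l.length)))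

/-- The type of all (finite, nonempty) permutations. -/
abbrev Permu := {l : List ℕ // IsPermList l}

/-- Helper to construct explicit permutations. -/
def p (l : List ℕ) (h : IsPermList l := by decide) : Permu := ⟨l, h⟩

/-- Pattern containment: `σ` is contained in `τ` when some (not necessarily
contiguous) subsequence of `τ` is order isomorphic to `σ`. -/
def Contains (σ τ : Permu) : Prop :=
  ∃ u : List ℕ, u.Sublist τ.val ∧ u.length = σ.val.length ∧
    ∀ i j : ℕ, i < u.length → j < u.length →
      (u.getD i 0 < u.getD j 0 ↔ σ.val.getD i 0 < σ.val.getD j 0)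

/-- A pattern class: a set of permutations closed downwards under containment. -/
def IsPatternClass (A : Set Permu) : Prop :=
  ∀ σ τ : Permu, τ ∈ A → Contains σ τ → σ ∈ A

/-- `Av B` is the set of permutations containing no member of the set `B`. -/
def Av (B : Set Permu) : Set Permu := {π | ∀ β ∈ B, ¬ Contains β π}

/-- An isomorphism of pattern classes is a bijection which preserves and
reflects containment. -/
def IsIso {A B : Set Permu} (f : ↥A → ↥B) : Prop :=
  Function.Bijective f ∧
  ∀ σ τ : ↥A, Contains σ.val τ.val ↔ Contains (f σ).val (f τ).val

/-- The shadow of `τ`: the permutations of length one less that are contained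
in `τ`. -/
def shadow (τ : Permu) : Set Permu :=
  {σ : Permu | σ.val.length + 1 = τ.val.length ∧ Contains σ τ}
/-- Wedge class Av(132, 231). -/
def WedgeS : Set Permu := Av {p [1,3,2], p [2,3,1]}
/-- Wedge class Av(213, 312). -/
def WedgeN : Set Permu := Av {p [2,1,3], p [3,1,2]}
/-- Wedge class Av(132, 312). -/
def WedgeW : Set Permu := Av {p [1,3,2], p [3,1,2]}
/-- Wedge class Av(213, 231). -/
def WedgeE : Set Permu := Av {p [2,1,3], p [2,3,1]}
/-- The class 𝒜₅: the four wedge classes together with 2143, 2413, 3142,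
3412, 25314 and 41352. -/
def W : Set Permu := WedgeS ∪ WedgeN ∪ WedgeW ∪ WedgeE ∪
  {p [2,1,4,3], p [2,4,1,3], p [3,1,4,2], p [3,4,1,2], p [2,5,3,1,4], p [4,1,3,5,2]}

/-!
For `n ≥ 6` the six exceptional permutations are too short, so the permutations counted are those
of length `n` in the union of the four wedge classes. Each wedge class is the set of permutations
without one kind of triple: a peak, a valley, a triple whose last entry has the middle value, or
one whose first entry has.

A peak-free permutation of length `n + 1` has its maximum at one end, and a permutation avoiding
132 and 312 ends with its minimum or its maximum; deleting that entry is two-to-one onto the class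
at length `n`, so both classes have `2^(n-1)` members of length `n`, and complementation and
reversal carry them onto the other two classes. Av(132, 231) ∩ Av(213, 312) and
Av(132, 312) ∩ Av(213, 231) contain only the two monotone permutations, since every triple has to
be monotone; hence so does every intersection of three of the classes. Each of the other four
pairwise intersections has `n` members: a permutation in Av(132, 231, 312) either ends with its
maximum or is decreasing. Inclusion–exclusion gives `4·2^(n-1) − 4n + 2 = 2^(n+1) − 4n + 2`.
-/

namespace List

variable {α β : Type*}

theorem sublist_pair_or_of_mem {l : List α} {a b : α} (ha : a ∈ l) (hb : b ∈ l) (hab : a ≠ b) :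
    [a, b] <+ l ∨ [b, a] <+ l :=
  haveI : Std.Symm fun x y : α => [x, y] <+ l ∨ [y, x] <+ l := ⟨fun _ _ => Or.symm⟩
  ((pairwise_iff_forall_sublist (R := fun x y => [x, y] <+ l ∨ [y, x] <+ l)).mpr
    fun h => .inl h).forall ha hb hab

theorem Nodup.ne_of_triple_sublist {l : List α} {x y z : α} (hl : l.Nodup)
    (hs : [x, y, z] <+ l) : x ≠ y ∧ y ≠ z ∧ x ≠ z := by
  obtain ⟨⟨hxy, hxz⟩, hyz⟩ : (x ≠ y ∧ x ≠ z) ∧ y ≠ z := by simpa using hs.nodup hl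
  exact ⟨hxy, hyz, hxz⟩

theorem Pairwise.of_triple_sublist {r : α → α → Prop} {l : List α} {x y z : α}
    (hl : l.Pairwise r) (hs : [x, y, z] <+ l) : r x y ∧ r y z ∧ r x z := by
  obtain ⟨⟨hxy, hxz⟩, hyz⟩ : (r x y ∧ r x z) ∧ r y z := by simpa using hl.sublist hs
  exact ⟨hxy, hyz, hxz⟩

def HasTriple (R : α → α → α → Prop) (l : List α) : Prop :=
  ∃ x y z, [x, y, z] <+ l ∧ R x y z

variable {R R' : α → α → α → Prop} {l l' : List α}

theorem HasTriple.mono (h : l <+ l') : l.HasTriple R → l'.HasTriple R :=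
  fun ⟨x, y, z, hs, hR⟩ => ⟨x, y, z, hs.trans h, hR⟩

theorem hasTriple_congr (h : ∀ x y z, [x, y, z] <+ l → (R x y z ↔ R' x y z)) :
    l.HasTriple R ↔ l.HasTriple R' :=
  ⟨fun ⟨x, y, z, hs, hR⟩ => ⟨x, y, z, hs, (h x y z hs).1 hR⟩,
    fun ⟨x, y, z, hs, hR⟩ => ⟨x, y, z, hs, (h x y z hs).2 hR⟩⟩

theorem hasTriple_or :
    l.HasTriple (fun x y z => R x y z ∨ R' x y z) ↔ l.HasTriple R ∨ l.HasTriple R' := by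
  simp only [HasTriple, and_or_left, exists_or]

theorem hasTriple_reverse : l.reverse.HasTriple R ↔ l.HasTriple fun x y z => R z y x := by
  have key : ∀ x y z, [x, y, z] <+ l.reverse ↔ [z, y, x] <+ l := fun x y z =>
    reverse_sublist (l₁ := [z, y, x])
  simp only [HasTriple, key]
  exact ⟨fun ⟨x, y, z, hs, hR⟩ => ⟨z, y, x, hs, hR⟩, fun ⟨x, y, z, hs, hR⟩ => ⟨z, y, x, hs, hR⟩⟩

theorem hasTriple_map {l : List β} (f : β → α) :
    (l.map f).HasTriple R ↔ l.HasTriple fun x y z => R (f x) (f y) (f z) := by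
  constructor
  · rintro ⟨_, _, _, hs, hR⟩
    obtain ⟨l', hl', he⟩ := sublist_map_iff.mp hs
    obtain ⟨x, y, z, rfl⟩ := length_eq_three.mp (by simpa using congrArg length he.symm)
    simp only [map_cons, map_nil, cons.injEq, and_true] at he
    obtain ⟨rfl, rfl, rfl⟩ := he
    exact ⟨x, y, z, hl', hR⟩
  · rintro ⟨x, y, z, hs, hR⟩
    exact ⟨f x, f y, f z, hs.map f, hR⟩

theorem hasTriple_append_singleton {a : α} :
    (l ++ [a]).HasTriple R ↔ l.HasTriple R ∨ ∃ x y, [x, y] <+ l ∧ R x y a := by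
  constructor
  · rintro ⟨x, y, z, hs, hR⟩
    obtain ⟨u, v, he, hu, hv⟩ := sublist_append_iff.mp hs
    rcases sublist_singleton.mp hv with rfl | rfl
    · rw [append_nil] at he
      exact .inl ⟨x, y, z, he ▸ hu, hR⟩
    · have he' : u ++ [a] = [x, y] ++ [z] := he.symm
      obtain ⟨rfl, hz⟩ := append_inj' he' rfl
      simp only [cons.injEq, and_true] at hz
      exact .inr ⟨x, y, hu, hz ▸ hR⟩
  · rintro (h | ⟨x, y, hs, hR⟩)
    · exact h.mono (sublist_append_left l [a])
    · exact ⟨x, y, a, hs.append (Sublist.refl [a]), hR⟩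

theorem not_hasTriple_of_length_lt (h : l.length < 3) : ¬ l.HasTriple R :=
  fun ⟨_, _, _, hs, _⟩ => by simpa using (hs.length_le.trans_lt h)

theorem pairwise_lt_or_gt_of_triples [LinearOrder α] :
    ∀ {l : List α}, l.Nodup → (∀ x y z, [x, y, z] <+ l → x < y ∧ y < z ∨ z < y ∧ y < x) →
      l.Pairwise (· < ·) ∨ l.Pairwise (· > ·)
  | [], _, _ => .inl .nil
  | [_], _, _ => .inl (pairwise_singleton _ _)
  | a :: b :: t, hl, h => by
    have ih := pairwise_lt_or_gt_of_triples hl.of_cons fun x y z hs => h x y z (hs.cons a)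
    have habc : ∀ c ∈ t, a < b ∧ b < c ∨ c < b ∧ b < a := fun c hc =>
      h a b c (.cons_cons a (.cons_cons b (singleton_sublist.mpr hc)))
    have hab : a ≠ b := by simp_all
    simp only [pairwise_cons, forall_mem_cons] at ih ⊢
    rcases hab.lt_or_gt with hab | hab
    · have hbt : ∀ c ∈ t, b < c := fun c hc => ((habc c hc).resolve_right fun h => h.2.asymm hab).2
      refine .inl ⟨⟨hab, fun c hc => hab.trans (hbt c hc)⟩, hbt, ?_⟩
      rcases ih with ih | ⟨hbt', -⟩
      · exact ih.2
      · rw [eq_nil_iff_forall_not_mem.mpr fun c hc => (hbt c hc).asymm (hbt' c hc)]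
        exact .nil
    · have hbt : ∀ c ∈ t, c < b := fun c hc => ((habc c hc).resolve_left fun h => h.1.asymm hab).1
      refine .inr ⟨⟨hab, fun c hc => (hbt c hc).trans hab⟩, hbt, ?_⟩
      rcases ih with ⟨hbt', -⟩ | ih
      · rw [eq_nil_iff_forall_not_mem.mpr fun c hc => (hbt c hc).asymm (hbt' c hc)]
        exact .nil
      · exact ih.2

end List

namespace Set

variable {α : Type*}

theorem ncard_union_image_of_disjoint {s : Set α} {f : α → α} (hs : s.Finite)
    (hf : InjOn f s) (hd : Disjoint s (f '' s)) : (s ∪ f '' s).ncard = 2 * s.ncard := by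
  rw [ncard_union_eq hd hs (hs.image f), hf.ncard_image, two_mul]

theorem ncard_union_four {A B C D : Set α} (hA : A.Finite) (hB : B.Finite)
    (hC : C.Finite) (hD : D.Finite) (h : A ∩ B = C ∩ D) :
    (A ∪ B ∪ C ∪ D).ncard + ((A ∩ C).ncard + (A ∩ D).ncard + (B ∩ C).ncard + (B ∩ D).ncard) =
      A.ncard + B.ncard + C.ncard + D.ncard + (A ∩ B).ncard := by
  -- inclusion–exclusion in which every intersection of three or four of the sets is `A ∩ B`
  have hx := Set.ext_iff.mp h
  have e1 := ncard_union_add_ncard_inter A B hA hB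
  have e2 := ncard_union_add_ncard_inter (A ∪ B) C (hA.union hB) hC
  have e3 := ncard_union_add_ncard_inter (A ∪ B ∪ C) D ((hA.union hB).union hC) hD
  have e4 := ncard_union_add_ncard_inter (A ∩ C) (B ∩ C) (hA.inter_of_left C)
    (hB.inter_of_left C)
  have e5 := ncard_union_add_ncard_inter (A ∩ D) (B ∩ D) (hA.inter_of_left D)
    (hB.inter_of_left D)
  have i2 : (A ∪ B) ∩ C = A ∩ C ∪ B ∩ C := union_inter_distrib_right A B C
  have i3 : (A ∪ B ∪ C) ∩ D = A ∩ D ∪ B ∩ D := by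
    ext x; have := hx x; simp only [mem_inter_iff, mem_union] at this ⊢; tauto
  have i4 : A ∩ C ∩ (B ∩ C) = A ∩ B := by
    ext x; have := hx x; simp only [mem_inter_iff] at this ⊢; tauto
  have i5 : A ∩ D ∩ (B ∩ D) = A ∩ B := by
    ext x; have := hx x; simp only [mem_inter_iff] at this ⊢; tauto
  rw [i2] at e2
  rw [i3] at e3
  rw [i4] at e4
  rw [i5] at e5
  omega

end Set

namespace PermList

open List

def perms (n : ℕ) : Set (List ℕ) := {l | l ~ range' 1 n}

def complement (n : ℕ) (l : List ℕ) : List ℕ := l.map (n + 1 - ·)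

variable {R R' : ℕ → ℕ → ℕ → Prop} {n : ℕ} {l s t : List ℕ}

theorem perms_finite (n : ℕ) : (perms n).Finite :=
  (range' 1 n).permutations.toFinset.finite_toSet.subset fun _ hl =>
    Finset.mem_coe.mpr (mem_toFinset.mpr (mem_permutations.mpr hl))

theorem nodup_of_mem_perms (hl : l ∈ perms n) : l.Nodup :=
  (Perm.nodup_iff hl).mpr nodup_range'

theorem length_of_mem_perms (hl : l ∈ perms n) : l.length = n := by
  simpa using hl.length_eq

theorem mem_iff_of_mem_perms (hl : l ∈ perms n) {x : ℕ} : x ∈ l ↔ 1 ≤ x ∧ x ≤ n := by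
  rw [Perm.mem_iff hl, mem_range'_1]
  omega

theorem le_of_mem_perms (hl : l ∈ perms n) {x : ℕ} (hx : x ∈ l) : x ≤ n :=
  ((mem_iff_of_mem_perms hl).mp hx).2

theorem perms_one : perms 1 = {[1]} := by
  ext l
  exact perm_singleton

theorem append_singleton_mem_perms_succ_iff : t ++ [n + 1] ∈ perms (n + 1) ↔ t ∈ perms n := by
  rw [perms, Set.mem_ofPred_eq, range'_concat, one_mul, add_comm 1 n]
  exact perm_append_right_iff _

theorem reverse_mem_perms_iff : l.reverse ∈ perms n ↔ l ∈ perms n :=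
  reverse_perm'

theorem complement_mem_perms (hl : l ∈ perms n) : complement n l ∈ perms n := by
  have : (range' 1 n).map (n + 1 - ·) = (range' 1 n).reverse := by
    rw [reverse_range', range'_eq_map_range, map_map]
    exact map_congr_left fun x hx => by simp at hx ⊢; omega
  exact ((hl.map _).trans (this ▸ Perm.refl _)).trans (reverse_perm _)

theorem complement_complement (hl : l ∈ perms n) : complement n (complement n l) = l := by
  rw [complement, complement, map_map]
  exact (map_congr_left fun x hx => by
    have := le_of_mem_perms hl hx; simp only [Function.comp_apply, id]; omega).trans
    (map_id l)

theorem complement_injOn : Set.InjOn (complement n) (perms n) := fun _ ha _ hb h => by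
  rw [← complement_complement ha, h, complement_complement hb]

theorem eq_range'_of_pairwise_lt (hl : l ∈ perms n) (h : l.Pairwise (· < ·)) :
    l = range' 1 n :=
  hl.eq_of_pairwise' h (pairwise_lt_range' 1 one_pos)

theorem eq_reverse_range'_of_pairwise_gt (hl : l ∈ perms n) (h : l.Pairwise (· > ·)) :
    l = (range' 1 n).reverse := by
  rw [← eq_range'_of_pairwise_lt (reverse_mem_perms_iff.mpr hl) (pairwise_reverse.mpr h),
    reverse_reverse]

def monotonePerms (n : ℕ) : Set (List ℕ) := {range' 1 n, (range' 1 n).reverse}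

def permsAvoiding (R : ℕ → ℕ → ℕ → Prop) (n : ℕ) : Set (List ℕ) :=
  {l | l ∈ perms n ∧ ¬ l.HasTriple R}

theorem permsAvoiding_finite (R : ℕ → ℕ → ℕ → Prop) (n : ℕ) : (permsAvoiding R n).Finite :=
  (perms_finite n).subset fun _ h => h.1

theorem permsAvoiding_congr (h : ∀ x ≤ n, ∀ y ≤ n, ∀ z ≤ n, R x y z ↔ R' x y z) :
    permsAvoiding R n = permsAvoiding R' n := by
  ext l
  refine and_congr_right fun hl => not_congr (hasTriple_congr fun x y z hs => ?_)
  have hle : ∀ v ∈ [x, y, z], v ≤ n := fun v hv => le_of_mem_perms hl (hs.subset hv)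
  exact h x (hle x (by simp)) y (hle y (by simp)) z (hle z (by simp))

theorem image_reverse_permsAvoiding :
    reverse '' permsAvoiding R n = permsAvoiding (fun x y z => R z y x) n := by
  ext l
  simp only [permsAvoiding, Set.mem_image, Set.mem_ofPred_eq, ← hasTriple_reverse]
  constructor
  · rintro ⟨t, ⟨ht, hR⟩, rfl⟩
    exact ⟨reverse_mem_perms_iff.mpr ht, by rwa [reverse_reverse]⟩
  · rintro ⟨hl, hR⟩
    exact ⟨l.reverse, ⟨reverse_mem_perms_iff.mpr hl, hR⟩, reverse_reverse l⟩

theorem image_complement_permsAvoiding :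
    complement n '' permsAvoiding R n =
      permsAvoiding (fun x y z => R (n + 1 - x) (n + 1 - y) (n + 1 - z)) n := by
  ext l
  simp only [permsAvoiding, Set.mem_image, Set.mem_ofPred_eq, ← hasTriple_map]
  constructor
  · rintro ⟨t, ⟨ht, hR⟩, rfl⟩
    exact ⟨complement_mem_perms ht, by rwa [← complement, complement_complement ht]⟩
  · rintro ⟨hl, hR⟩
    exact ⟨complement n l, ⟨complement_mem_perms hl, hR⟩, complement_complement hl⟩

theorem append_mem_permsAvoiding_succ_iff (hR : ∀ x ≤ n, ∀ y ≤ n, ¬ R x y (n + 1)) :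
    t ++ [n + 1] ∈ permsAvoiding R (n + 1) ↔ t ∈ permsAvoiding R n := by
  simp only [permsAvoiding, Set.mem_ofPred_eq, append_singleton_mem_perms_succ_iff,
    hasTriple_append_singleton, not_or]
  refine and_congr_right fun ht => and_iff_left ?_
  rintro ⟨x, y, hs, hxy⟩
  have hle : ∀ v ∈ [x, y], v ≤ n := fun v hv => le_of_mem_perms ht (hs.subset hv)
  exact hR x (hle x (by simp)) y (hle y (by simp)) hxy

theorem permsAvoiding_one : permsAvoiding R 1 = {[1]} := by
  ext l
  rw [permsAvoiding, perms_one]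
  exact ⟨And.left, fun hl => ⟨hl, hl ▸ not_hasTriple_of_length_lt (by simp)⟩⟩

theorem inter_permsAvoiding_eq_monotonePerms
    (h : ∀ x y z, x ≠ y → y ≠ z → x ≠ z →
      (¬ R x y z ∧ ¬ R' x y z ↔ x < y ∧ y < z ∨ z < y ∧ y < x)) :
    permsAvoiding R n ∩ permsAvoiding R' n = monotonePerms n := by
  have hasc : (range' 1 n).Pairwise (· < ·) := pairwise_lt_range' 1 one_pos
  have hdsc : (range' 1 n).reverse.Pairwise (· > ·) := pairwise_reverse.mpr hasc
  ext l
  constructor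
  · rintro ⟨⟨hl, hR⟩, -, hR'⟩
    have hnd := nodup_of_mem_perms hl
    refine (pairwise_lt_or_gt_of_triples hnd fun x y z hs => ?_).imp
      (eq_range'_of_pairwise_lt hl) (eq_reverse_range'_of_pairwise_gt hl)
    obtain ⟨hxy, hyz, hxz⟩ := hnd.ne_of_triple_sublist hs
    exact (h x y z hxy hyz hxz).mp ⟨fun r => hR ⟨x, y, z, hs, r⟩, fun r => hR' ⟨x, y, z, hs, r⟩⟩
  · have hmem : ∀ l ∈ perms n, (∀ x y z, [x, y, z] <+ l → x < y ∧ y < z ∨ z < y ∧ y < x) →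
        l ∈ permsAvoiding R n ∩ permsAvoiding R' n := fun l hl hmono => by
      have key x y z (hs : [x, y, z] <+ l) : ¬ R x y z ∧ ¬ R' x y z :=
        let ⟨hxy, hyz, hxz⟩ := (nodup_of_mem_perms hl).ne_of_triple_sublist hs
        (h x y z hxy hyz hxz).mpr (hmono x y z hs)
      exact ⟨⟨hl, fun ⟨x, y, z, hs, r⟩ => (key x y z hs).1 r⟩,
        hl, fun ⟨x, y, z, hs, r⟩ => (key x y z hs).2 r⟩
    rintro (rfl | rfl)
    · exact hmem _ (Perm.refl _) fun x y z hs =>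
        let ⟨hxy, hyz, _⟩ := hasc.of_triple_sublist hs; .inl ⟨hxy, hyz⟩
    · exact hmem _ (reverse_perm _) fun x y z hs =>
        let ⟨hxy, hyz, _⟩ := hdsc.of_triple_sublist hs; .inr ⟨hyz, hxy⟩

-- Occurrences of 132 or 231, of 213 or 312, of 132 or 312, and of 213 or 231.
def IsPeak (x y z : ℕ) : Prop := x < y ∧ z < y
def IsValley (x y z : ℕ) : Prop := y < x ∧ y < z
def IsMidLast (x y z : ℕ) : Prop := x < z ∧ z < y ∨ y < z ∧ z < x
def IsMidFirst (x y z : ℕ) : Prop := y < x ∧ x < z ∨ z < x ∧ x < y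

theorem image_reverse_peak : reverse '' permsAvoiding IsPeak n = permsAvoiding IsPeak n := by
  rw [image_reverse_permsAvoiding]
  exact permsAvoiding_congr fun x _ y _ z _ => by simp only [IsPeak]; omega

theorem image_reverse_valley : reverse '' permsAvoiding IsValley n = permsAvoiding IsValley n := by
  rw [image_reverse_permsAvoiding]
  exact permsAvoiding_congr fun x _ y _ z _ => by simp only [IsValley]; omega

theorem image_reverse_midLast :
    reverse '' permsAvoiding IsMidLast n = permsAvoiding IsMidFirst n := by
  rw [image_reverse_permsAvoiding]
  exact permsAvoiding_congr fun x _ y _ z _ => by simp only [IsMidLast, IsMidFirst]; omega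

theorem image_complement_peak :
    complement n '' permsAvoiding IsPeak n = permsAvoiding IsValley n := by
  rw [image_complement_permsAvoiding]
  exact permsAvoiding_congr fun x _ y _ z _ => by simp only [IsPeak, IsValley]; omega

theorem image_complement_midLast :
    complement n '' permsAvoiding IsMidLast n = permsAvoiding IsMidLast n := by
  rw [image_complement_permsAvoiding]
  exact permsAvoiding_congr fun x _ y _ z _ => by simp only [IsMidLast]; omega

theorem append_mem_permsAvoiding_peak_iff :
    t ++ [n + 1] ∈ permsAvoiding IsPeak (n + 1) ↔ t ∈ permsAvoiding IsPeak n :=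
  append_mem_permsAvoiding_succ_iff fun _ _ _ _ h => by simp only [IsPeak] at h; omega

theorem append_mem_permsAvoiding_midLast_iff :
    t ++ [n + 1] ∈ permsAvoiding IsMidLast (n + 1) ↔ t ∈ permsAvoiding IsMidLast n :=
  append_mem_permsAvoiding_succ_iff fun _ _ _ _ h => by simp only [IsMidLast] at h; omega

theorem permsAvoiding_peak_succ (n : ℕ) :
    permsAvoiding IsPeak (n + 1) = (· ++ [n + 1]) '' permsAvoiding IsPeak n ∪
      reverse '' ((· ++ [n + 1]) '' permsAvoiding IsPeak n) := by
  ext l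
  constructor
  · intro hl
    obtain ⟨s, t, rfl⟩ := append_of_mem ((mem_iff_of_mem_perms hl.1).mpr ⟨by omega, le_rfl⟩)
    rcases t with _ | ⟨c, t⟩
    · exact .inl ⟨s, append_mem_permsAvoiding_peak_iff.mp hl, rfl⟩
    rcases s with _ | ⟨a, s⟩
    · have hrev : (c :: t).reverse ++ [n + 1] ∈ permsAvoiding IsPeak (n + 1) := by
        rw [← image_reverse_peak]
        exact ⟨_, hl, by simp⟩
      exact .inr ⟨_, ⟨_, append_mem_permsAvoiding_peak_iff.mp hrev, rfl⟩, by simp⟩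
    · -- an interior maximum is the top of a peak
      have hs : [a, n + 1, c] <+ a :: s ++ (n + 1) :: c :: t := by simp
      obtain ⟨ha, hc, -⟩ := (nodup_of_mem_perms hl.1).ne_of_triple_sublist hs
      have ha' := le_of_mem_perms hl.1 (hs.subset (by simp : a ∈ _))
      have hc' := le_of_mem_perms hl.1 (hs.subset (by simp : c ∈ _))
      exact absurd ⟨a, n + 1, c, hs, by unfold IsPeak; omega⟩ hl.2
  · rintro (⟨t, ht, rfl⟩ | ⟨_, ⟨t, ht, rfl⟩, rfl⟩)
    · exact append_mem_permsAvoiding_peak_iff.mpr ht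
    · rw [← image_reverse_peak]
      exact Set.mem_image_of_mem _ (append_mem_permsAvoiding_peak_iff.mpr ht)


theorem ncard_permsAvoiding_peak (n : ℕ) : (permsAvoiding IsPeak (n + 1)).ncard = 2 ^ n := by
  induction n with
  | zero => simp [permsAvoiding_one]
  | succ n ih =>
    have hdisj : Disjoint ((· ++ [n + 2]) '' permsAvoiding IsPeak (n + 1))
        (reverse '' ((· ++ [n + 2]) '' permsAvoiding IsPeak (n + 1))) := by
      refine Set.disjoint_left.mpr ?_
      rintro _ ⟨t, ht, rfl⟩ ⟨_, ⟨t', -, rfl⟩, he⟩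
      rcases t with _ | ⟨a, t⟩
      · simpa using length_of_mem_perms ht.1
      · simp only [reverse_append, reverse_cons, reverse_nil, nil_append, cons_append,
          cons.injEq] at he
        have := le_of_mem_perms ht.1 mem_cons_self
        omega
    rw [permsAvoiding_peak_succ, Set.ncard_union_image_of_disjoint
      ((permsAvoiding_finite _ _).image _) reverse_injective.injOn hdisj,
      Set.ncard_image_of_injective _ (append_left_injective _), ih, pow_succ, mul_comm]

theorem last_eq_one_or_of_not_hasTriple_midLast {z : ℕ} (hl : s ++ [z] ∈ perms (n + 1))
    (h : ¬ (s ++ [z]).HasTriple IsMidLast) : z = 1 ∨ z = n + 1 := by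
  by_contra! hz
  have hbound := (mem_iff_of_mem_perms hl).mp (mem_append_right s (mem_singleton_self z))
  have hmem : ∀ x, 1 ≤ x → x ≤ n + 1 → x ≠ z → x ∈ s := fun x h1 h2 hx => by
    simpa [hx] using (mem_iff_of_mem_perms hl).mpr ⟨h1, h2⟩
  rcases sublist_pair_or_of_mem (hmem 1 le_rfl (by omega) (by omega))
    (hmem (n + 1) (by omega) le_rfl (by omega)) (by omega) with hs | hs
  · exact h ⟨1, n + 1, z, hs.append (Sublist.refl _), .inl (by omega)⟩
  · exact h ⟨n + 1, 1, z, hs.append (Sublist.refl _), .inr (by omega)⟩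

theorem permsAvoiding_midLast_succ (n : ℕ) :
    permsAvoiding IsMidLast (n + 1) = (· ++ [n + 1]) '' permsAvoiding IsMidLast n ∪
      complement (n + 1) '' ((· ++ [n + 1]) '' permsAvoiding IsMidLast n) := by
  ext l
  constructor
  · intro hl
    obtain rfl | ⟨s, z, rfl⟩ := l.eq_nil_or_concat'
    · simpa using length_of_mem_perms hl.1
    rcases last_eq_one_or_of_not_hasTriple_midLast hl.1 hl.2 with rfl | rfl
    · have hc : complement (n + 1) (s ++ [1]) = complement (n + 1) s ++ [n + 1] := by
        simp [complement]
      have hcl : complement (n + 1) s ++ [n + 1] ∈ permsAvoiding IsMidLast (n + 1) := by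
        rw [← hc, ← image_complement_midLast]
        exact Set.mem_image_of_mem _ hl
      refine .inr ⟨_, ⟨_, append_mem_permsAvoiding_midLast_iff.mp hcl, rfl⟩, ?_⟩
      beta_reduce
      rw [← hc, complement_complement hl.1]
    · exact .inl ⟨s, append_mem_permsAvoiding_midLast_iff.mp hl, rfl⟩
  · rintro (⟨t, ht, rfl⟩ | ⟨_, ⟨t, ht, rfl⟩, rfl⟩)
    · exact append_mem_permsAvoiding_midLast_iff.mpr ht
    · rw [← image_complement_midLast]
      exact Set.mem_image_of_mem _ (append_mem_permsAvoiding_midLast_iff.mpr ht)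

theorem ncard_permsAvoiding_midLast (n : ℕ) :
    (permsAvoiding IsMidLast (n + 1)).ncard = 2 ^ n := by
  induction n with
  | zero => simp [permsAvoiding_one]
  | succ n ih =>
    have hdisj : Disjoint ((· ++ [n + 2]) '' permsAvoiding IsMidLast (n + 1))
        (complement (n + 2) '' ((· ++ [n + 2]) '' permsAvoiding IsMidLast (n + 1))) := by
      refine Set.disjoint_left.mpr ?_
      rintro _ ⟨t, -, rfl⟩ ⟨_, ⟨t', -, rfl⟩, he⟩
      simp [complement] at he
    rw [permsAvoiding_midLast_succ, Set.ncard_union_image_of_disjoint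
      ((permsAvoiding_finite _ _).image _) (complement_injOn.mono ?_) hdisj,
      Set.ncard_image_of_injective _ (append_left_injective _), ih, pow_succ, mul_comm]
    rintro _ ⟨t, ht, rfl⟩
    exact (append_mem_permsAvoiding_midLast_iff.mpr ht).1

theorem peak_inter_midLast_succ (n : ℕ) :
    permsAvoiding IsPeak (n + 1) ∩ permsAvoiding IsMidLast (n + 1) =
      insert (range' 1 (n + 1)).reverse
        ((· ++ [n + 1]) '' (permsAvoiding IsPeak n ∩ permsAvoiding IsMidLast n)) := by
  ext l
  constructor
  · rintro ⟨hS, hW⟩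
    obtain rfl | ⟨s, z, rfl⟩ := l.eq_nil_or_concat'
    · simpa using length_of_mem_perms hS.1
    rcases last_eq_one_or_of_not_hasTriple_midLast hW.1 hW.2 with rfl | rfl
    · -- a peak-free permutation ending in 1 is decreasing
      refine .inl (eq_reverse_range'_of_pairwise_gt hS.1 ?_)
      have hnd := nodup_of_mem_perms hS.1
      have hs1 : ∀ a ∈ s, 1 < a := fun a ha => by
        have := (mem_iff_of_mem_perms hS.1).mp (mem_append_left [1] ha)
        have := (nodup_append.mp hnd).2.2 a ha 1 (mem_singleton_self 1)
        omega
      refine pairwise_append.mpr ⟨pairwise_iff_forall_sublist.mpr fun {a b} hab => ?_,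
        pairwise_singleton _ _, fun a ha b hb => (mem_singleton.mp hb) ▸ hs1 a ha⟩
      have hs : [a, b, 1] <+ s ++ [1] := hab.append (Sublist.refl _)
      have := hs1 b (hab.subset (by simp))
      have := (hnd.ne_of_triple_sublist hs).1
      by_contra hba
      exact hS.2 ⟨a, b, 1, hs, by unfold IsPeak; omega⟩
    · exact .inr ⟨s, ⟨append_mem_permsAvoiding_peak_iff.mp hS,
        append_mem_permsAvoiding_midLast_iff.mp hW⟩, rfl⟩
  · rintro (rfl | ⟨t, ⟨hS, hW⟩, rfl⟩)
    · have hdsc : (range' 1 (n + 1)).reverse.Pairwise (· > ·) :=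
        pairwise_reverse.mpr (pairwise_lt_range' 1 one_pos)
      refine ⟨⟨reverse_perm _, fun ⟨x, y, z, hs, h⟩ => ?_⟩,
        reverse_perm _, fun ⟨x, y, z, hs, h⟩ => ?_⟩ <;>
      · have := hdsc.of_triple_sublist hs
        simp only [IsPeak, IsMidLast] at h
        omega
    · exact ⟨append_mem_permsAvoiding_peak_iff.mpr hS, append_mem_permsAvoiding_midLast_iff.mpr hW⟩

theorem ncard_peak_inter_midLast (n : ℕ) :
    (permsAvoiding IsPeak (n + 1) ∩ permsAvoiding IsMidLast (n + 1)).ncard = n + 1 := by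
  induction n with
  | zero => simp [permsAvoiding_one]
  | succ n ih =>
    have hnot : (range' 1 (n + 2)).reverse ∉
        (· ++ [n + 2]) '' (permsAvoiding IsPeak (n + 1) ∩ permsAvoiding IsMidLast (n + 1)) := by
      rintro ⟨t, -, he⟩
      rw [range'_succ, reverse_cons] at he
      simpa using (append_inj' he rfl).2
    rw [peak_inter_midLast_succ, Set.ncard_insert_of_notMem hnot
      (((permsAvoiding_finite _ _).inter_of_left _).image _),
      Set.ncard_image_of_injective _ (append_left_injective _), ih]

theorem ncard_permsAvoiding_valley (n : ℕ) :
    (permsAvoiding IsValley (n + 1)).ncard = 2 ^ n := by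
  rw [← image_complement_peak, (complement_injOn.mono fun _ h => h.1).ncard_image,
    ncard_permsAvoiding_peak]

theorem ncard_permsAvoiding_midFirst (n : ℕ) :
    (permsAvoiding IsMidFirst (n + 1)).ncard = 2 ^ n := by
  rw [← image_reverse_midLast, Set.ncard_image_of_injective _ reverse_injective,
    ncard_permsAvoiding_midLast]

theorem ncard_peak_inter_midFirst (n : ℕ) :
    (permsAvoiding IsPeak (n + 1) ∩ permsAvoiding IsMidFirst (n + 1)).ncard = n + 1 := by
  rw [← image_reverse_peak, ← image_reverse_midLast, ← Set.image_inter reverse_injective,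
    Set.ncard_image_of_injective _ reverse_injective, ncard_peak_inter_midLast]

theorem ncard_valley_inter_midLast (n : ℕ) :
    (permsAvoiding IsValley (n + 1) ∩ permsAvoiding IsMidLast (n + 1)).ncard = n + 1 := by
  have hinj : Set.InjOn (complement (n + 1)) (perms (n + 1)) := complement_injOn
  rw [← image_complement_peak, ← image_complement_midLast,
    ← hinj.image_inter (fun _ h => h.1) (fun _ h => h.1),
    (hinj.mono fun _ h => h.1.1).ncard_image, ncard_peak_inter_midLast]

theorem ncard_valley_inter_midFirst (n : ℕ) :
    (permsAvoiding IsValley (n + 1) ∩ permsAvoiding IsMidFirst (n + 1)).ncard = n + 1 := by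
  rw [← image_reverse_valley, ← image_reverse_midLast, ← Set.image_inter reverse_injective,
    Set.ncard_image_of_injective _ reverse_injective, ncard_valley_inter_midLast]

theorem peak_inter_valley : permsAvoiding IsPeak n ∩ permsAvoiding IsValley n = monotonePerms n :=
  inter_permsAvoiding_eq_monotonePerms fun x y z _ _ _ => by simp only [IsPeak, IsValley]; omega

theorem midLast_inter_midFirst :
    permsAvoiding IsMidLast n ∩ permsAvoiding IsMidFirst n = monotonePerms n :=
  inter_permsAvoiding_eq_monotonePerms fun x y z _ _ _ => by simp only [IsMidLast, IsMidFirst]; omega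

theorem ncard_monotonePerms (hn : 2 ≤ n) : (monotonePerms n).ncard = 2 := by
  refine Set.ncard_pair fun h => ?_
  obtain ⟨m, rfl⟩ : ∃ m, n = m + 2 := ⟨n - 2, by omega⟩
  have := congrArg head? h
  rw [head?_reverse, head?_range', getLast?_range'] at this
  simp at this

def SameOrderType (a b c x y z : ℕ) : Prop :=
  (x < y ↔ a < b) ∧ (x < z ↔ a < c) ∧ (y < z ↔ b < c) ∧
    (y < x ↔ b < a) ∧ (z < x ↔ c < a) ∧ (z < y ↔ c < b)

theorem contains_three_iff {a b c : ℕ} (h : IsPermList [a, b, c]) (τ : Permu) :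
    Contains (p [a, b, c] h) τ ↔ τ.val.HasTriple (SameOrderType a b c) := by
  constructor
  · rintro ⟨u, hu, hlen, hord⟩
    obtain ⟨x, y, z, rfl⟩ := length_eq_three.mp hlen
    exact ⟨x, y, z, hu,
      by simpa [p] using hord 0 1 (by simp) (by simp),
      by simpa [p] using hord 0 2 (by simp) (by simp),
      by simpa [p] using hord 1 2 (by simp) (by simp),
      by simpa [p] using hord 1 0 (by simp) (by simp),
      by simpa [p] using hord 2 0 (by simp) (by simp),
      by simpa [p] using hord 2 1 (by simp) (by simp)⟩
  · rintro ⟨x, y, z, hu, h1, h2, h3, h4, h5, h6⟩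
    refine ⟨[x, y, z], hu, rfl, fun i j hi hj => ?_⟩
    simp only [length_cons, length_nil] at hi hj
    interval_cases i <;> interval_cases j <;> simp_all [p]

theorem mem_av_pair_iff {a b c a' b' c' : ℕ} (h : IsPermList [a, b, c])
    (h' : IsPermList [a', b', c']) {R : ℕ → ℕ → ℕ → Prop}
    (hR : ∀ x y z, x ≠ y → y ≠ z → x ≠ z →
      (R x y z ↔ SameOrderType a b c x y z ∨ SameOrderType a' b' c' x y z)) (τ : Permu) :
    τ ∈ Av {p [a, b, c] h, p [a', b', c'] h'} ↔ ¬ τ.val.HasTriple R := by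
  simp only [Av, Set.mem_ofPred_eq, Set.mem_insert_iff, Set.mem_singleton_iff,
    forall_eq_or_imp, forall_eq, contains_three_iff, ← not_or, ← hasTriple_or]
  refine not_congr (hasTriple_congr fun x y z hs => ?_)
  obtain ⟨hxy, hyz, hxz⟩ := (nodup_of_mem_perms τ.property.2).ne_of_triple_sublist hs
  exact (hR x y z hxy hyz hxz).symm

theorem mem_wedgeS_iff (τ : Permu) : τ ∈ WedgeS ↔ ¬ τ.val.HasTriple IsPeak :=
  mem_av_pair_iff _ _ (fun x y z _ _ _ => by simp only [IsPeak, SameOrderType]; omega) τ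

theorem mem_wedgeN_iff (τ : Permu) : τ ∈ WedgeN ↔ ¬ τ.val.HasTriple IsValley :=
  mem_av_pair_iff _ _ (fun x y z _ _ _ => by simp only [IsValley, SameOrderType]; omega) τ

theorem mem_wedgeW_iff (τ : Permu) : τ ∈ WedgeW ↔ ¬ τ.val.HasTriple IsMidLast :=
  mem_av_pair_iff _ _ (fun x y z _ _ _ => by simp only [IsMidLast, SameOrderType]; omega) τ

theorem mem_wedgeE_iff (τ : Permu) : τ ∈ WedgeE ↔ ¬ τ.val.HasTriple IsMidFirst :=
  mem_av_pair_iff _ _ (fun x y z _ _ _ => by simp only [IsMidFirst, SameOrderType]; omega) τ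

theorem image_val_W (hn : 6 ≤ n) :
    Subtype.val '' {π : Permu | π ∈ W ∧ π.val.length = n} =
      permsAvoiding IsPeak n ∪ permsAvoiding IsValley n ∪ permsAvoiding IsMidLast n ∪
        permsAvoiding IsMidFirst n := by
  ext l
  constructor
  · rintro ⟨π, ⟨hW, hlen⟩, rfl⟩
    have hl : π.val ∈ perms n := hlen ▸ π.property.2
    rcases hW with (((h | h) | h) | h) | h
    · exact .inl (.inl (.inl ⟨hl, (mem_wedgeS_iff π).mp h⟩))
    · exact .inl (.inl (.inr ⟨hl, (mem_wedgeN_iff π).mp h⟩))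
    · exact .inl (.inr ⟨hl, (mem_wedgeW_iff π).mp h⟩)
    · exact .inr ⟨hl, (mem_wedgeE_iff π).mp h⟩
    · simp only [Set.mem_insert_iff, Set.mem_singleton_iff] at h
      rcases h with rfl | rfl | rfl | rfl | rfl | rfl <;> simp [p] at hlen <;> omega
  · intro hl
    have hperm : l ∈ perms n := by rcases hl with ((h | h) | h) | h <;> exact h.1
    have hlen := length_of_mem_perms hperm
    let π : Permu := ⟨l, ne_nil_of_length_pos (by omega), by rw [hlen]; exact hperm⟩
    refine ⟨π, ⟨?_, hlen⟩, rfl⟩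
    rcases hl with ((h | h) | h) | h
    · exact .inl (.inl (.inl (.inl ((mem_wedgeS_iff π).mpr h.2))))
    · exact .inl (.inl (.inl (.inr ((mem_wedgeN_iff π).mpr h.2))))
    · exact .inl (.inl (.inr ((mem_wedgeW_iff π).mpr h.2)))
    · exact .inl (.inr ((mem_wedgeE_iff π).mpr h.2))

end PermList

open PermList in
/-- for n ≥ 6, W contains 2^{n+1} − 4n + 2 permutations of
length n. -/
theorem statement_15 (n : ℕ) (hn : 6 ≤ n) :
    (Set.ncard {π : Permu | π ∈ W ∧ π.val.length = n} : ℤ) =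
      2 ^ (n + 1) - 4 * n + 2 := by
  obtain ⟨m, rfl⟩ : ∃ m, n = m + 1 := ⟨n - 1, by omega⟩
  have hcount := Set.ncard_union_four (permsAvoiding_finite IsPeak (m + 1))
    (permsAvoiding_finite IsValley _) (permsAvoiding_finite IsMidLast _)
    (permsAvoiding_finite IsMidFirst _) (peak_inter_valley.trans midLast_inter_midFirst.symm)
  rw [ncard_peak_inter_midLast, ncard_peak_inter_midFirst, ncard_valley_inter_midLast,
    ncard_valley_inter_midFirst, ncard_permsAvoiding_peak, ncard_permsAvoiding_valley,
    ncard_permsAvoiding_midLast, ncard_permsAvoiding_midFirst, peak_inter_valley,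
    ncard_monotonePerms (by omega)] at hcount
  rw [← Set.ncard_image_of_injective _ Subtype.val_injective, image_val_W hn, pow_succ, pow_succ]
  zify at hcount
  omega
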